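/- Let (X,e) be a complete L-ordered set, let r : Φ_L(X) → X be defined on open filters of (X,σ_L(X)) by r(u) = ⊔(u^l). Then for every Scott open L-subset A ∈ σ_L(X) and every open filter u, A(r(u)) ≤ u(A), i.e. r⁻(A) ≤ φ(A) pointwise on Φ_L(X). -/

import Mathlib

/-!
The lower `L`-set `u^l` is directed: `u^l` contains `⊔ ⊥` to degree `1`, and two generators
`u(A) ⊓ sub(A, ↑x)` and `u(B) ⊓ sub(B, ↑y)` are dominated at the `L`-infimum `z` of `A ⊓ B`,
which lies above `x` and `y` to the required degrees while `sub(A ⊓ B, ↑z) = 1`. Scott openness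
of `A` at `r(u) = ⊔ u^l` then reduces the claim to `A(x) ⊓ u(B) ⊓ sub(B, ↑x) ≤ u(A)`. Since `A`
is an upper set, `B ⊓ c ≤ A` for the constant `c = A(x) ⊓ sub(B, ↑x)`, and an open filter is
monotone, preserves meets and dominates constants, so `u(B) ⊓ c ≤ u(B ⊓ c) ≤ u(A)`.
-/

variable {L : Type*} {X : Type*} {Y : Type*}

/-- `sub(A,B) = ⨅ x, A x ⇨ B x` for `L`-subsets `A B : X → L`. -/
def subL [Order.Frame L] (A B : X → L) : L := ⨅ x, A x ⇨ B x

/-- An `L`-valued topology on `X`: a family of `L`-subsets closed under binary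
pointwise infima, arbitrary pointwise suprema, containing all constants. -/
structure IsLTopology [Order.Frame L] (𝒪 : Set (X → L)) : Prop where
  inf_mem : ∀ A B : X → L, A ∈ 𝒪 → B ∈ 𝒪 → A ⊓ B ∈ 𝒪
  sSup_mem : ∀ S : Set (X → L), S ⊆ 𝒪 → sSup S ∈ 𝒪
  const_mem : ∀ a : L, (fun _ => a : X → L) ∈ 𝒪

/-- An open filter of `(X, 𝒪)`: a map `u : 𝒪 → L` with `u (A ⊓ B) = u A ⊓ u B`
and `u (a_X) ≥ a`. -/
structure LFilter [Order.Frame L] (𝒪 : Set (X → L)) where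
  toFun : ↥𝒪 → L
  map_inf : ∀ (A B : ↥𝒪) (h : (A : X → L) ⊓ (B : X → L) ∈ 𝒪),
    toFun ⟨(A : X → L) ⊓ (B : X → L), h⟩ = toFun A ⊓ toFun B
  const_le : ∀ (a : L) (h : (fun _ => a : X → L) ∈ 𝒪), a ≤ toFun ⟨fun _ => a, h⟩

/-- `φ(A)(u) = u(A)`. -/
def phiF [Order.Frame L] (𝒪 : Set (X → L)) (A : ↥𝒪) : LFilter 𝒪 → L := fun u => u.toFun A

/-- The `L`-valued topology on `Φ_L(X)` generated by the base `{φ(A) | A ∈ 𝒪}`: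
its members are exactly the suprema `⨆_j φ(A_j) ⊓ (a_j)_const`. -/
def filtOpens [Order.Frame L] (𝒪 : Set (X → L)) : Set (LFilter 𝒪 → L) :=
  { W | ∃ S : Set (↥𝒪 × L), W = fun u => ⨆ p ∈ S, u.toFun p.1 ⊓ p.2 }

/-- The pointed filter `[x](A) = A(x)`. -/
def ptFilter [Order.Frame L] (𝒪 : Set (X → L)) (x : X) : LFilter 𝒪 where
  toFun A := (A : X → L) x
  map_inf _ _ _ := rfl
  const_le _ _ := le_rfl

/-- The filter `[S](A) = sub(S, A)` for an `L`-subset `S`. -/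
def prFilter [Order.Frame L] (𝒪 : Set (X → L)) (S : X → L) : LFilter 𝒪 where
  toFun A := subL S (A : X → L)
  map_inf A B h := by
    simp only [subL, Pi.inf_apply, himp_inf_distrib]
    exact iInf_inf_eq
  const_le a h := le_iInf fun x => le_himp_iff.2 inf_le_left

/-- `Φ_L f` for a continuous map `f`. -/
def filtMap [Order.Frame L] (𝒪X : Set (X → L)) (𝒪Y : Set (Y → L)) (f : X → Y)
    (hf : ∀ B : ↥𝒪Y, (B : Y → L) ∘ f ∈ 𝒪X) (u : LFilter 𝒪X) : LFilter 𝒪Y where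
  toFun B := u.toFun ⟨(B : Y → L) ∘ f, hf B⟩
  map_inf A B h := u.map_inf ⟨(A : Y → L) ∘ f, hf A⟩ ⟨(B : Y → L) ∘ f, hf B⟩
    (hf ⟨(A : Y → L) ⊓ (B : Y → L), h⟩)
  const_le a h := u.const_le a (hf ⟨fun _ => a, h⟩)

lemma phi_mem [Order.Frame L] (𝒪 : Set (X → L)) (A : ↥𝒪) : phiF 𝒪 A ∈ filtOpens 𝒪 := by
  refine ⟨{(A, ⊤)}, ?_⟩
  funext u
  simp [phiF]

lemma LFilter.mono [Order.Frame L] {𝒪 : Set (X → L)} (u : LFilter 𝒪) (A B : ↥𝒪)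
    (hAB : (A : X → L) ≤ (B : X → L)) : u.toFun A ≤ u.toFun B := by
  have h : (A : X → L) ⊓ (B : X → L) ∈ 𝒪 := by
    rw [inf_eq_left.2 hAB]; exact A.2
  have h2 := u.map_inf A B h
  have h3 : (⟨(A : X → L) ⊓ (B : X → L), h⟩ : ↥𝒪) = A := Subtype.ext (inf_eq_left.2 hAB)
  rw [h3] at h2
  rw [h2]
  exact inf_le_right

lemma phi_inf [Order.Frame L] (𝒪 : Set (X → L)) (A B : ↥𝒪)
    (h : (A : X → L) ⊓ (B : X → L) ∈ 𝒪) :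
    phiF 𝒪 ⟨(A : X → L) ⊓ (B : X → L), h⟩ = phiF 𝒪 A ⊓ phiF 𝒪 B := by
  funext u
  exact u.map_inf A B h

lemma const_mem_filtOpens [Order.Frame L] (𝒪 : Set (X → L)) (a : L)
    (h : (fun _ => a : X → L) ∈ 𝒪) :
    (fun _ => a : LFilter 𝒪 → L) ∈ filtOpens 𝒪 := by
  refine ⟨{(⟨fun _ => a, h⟩, a)}, ?_⟩
  funext u
  simp only [Set.mem_singleton_iff, iSup_iSup_eq_left]
  exact (inf_eq_right.2 (u.const_le a h)).symm

/-- `μ_X(α)(A) = α(φ(A))`. -/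
def muF [Order.Frame L] (𝒪 : Set (X → L)) (α : LFilter (filtOpens 𝒪)) : LFilter 𝒪 where
  toFun A := α.toFun ⟨phiF 𝒪 A, phi_mem 𝒪 A⟩
  map_inf A B h := by
    have h' : phiF 𝒪 A ⊓ phiF 𝒪 B ∈ filtOpens 𝒪 := phi_inf 𝒪 A B h ▸ phi_mem 𝒪 ⟨_, h⟩
    have h2 := α.map_inf ⟨phiF 𝒪 A, phi_mem 𝒪 A⟩ ⟨phiF 𝒪 B, phi_mem 𝒪 B⟩ h'
    have h3 : (⟨phiF 𝒪 ⟨(A : X → L) ⊓ (B : X → L), h⟩, phi_mem 𝒪 ⟨_, h⟩⟩ :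
        ↥(filtOpens 𝒪)) = ⟨phiF 𝒪 A ⊓ phiF 𝒪 B, h'⟩ := Subtype.ext (phi_inf 𝒪 A B h)
    show α.toFun ⟨phiF 𝒪 ⟨(A : X → L) ⊓ (B : X → L), h⟩, phi_mem 𝒪 ⟨_, h⟩⟩ =
      α.toFun ⟨phiF 𝒪 A, phi_mem 𝒪 A⟩ ⊓ α.toFun ⟨phiF 𝒪 B, phi_mem 𝒪 B⟩
    rw [h3]
    exact h2
  const_le a h := by
    have h1 : (fun _ => a : LFilter 𝒪 → L) ∈ filtOpens 𝒪 := const_mem_filtOpens 𝒪 a h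
    have h2 : (fun _ => a : LFilter 𝒪 → L) ≤ phiF 𝒪 ⟨fun _ => a, h⟩ :=
      fun u => u.const_le a h
    exact le_trans (α.const_le a h1) (α.mono ⟨_, h1⟩ ⟨_, phi_mem 𝒪 ⟨_, h⟩⟩ h2)

lemma filtMap_continuous [Order.Frame L] (𝒪X : Set (X → L)) (𝒪Y : Set (Y → L)) (f : X → Y)
    (hf : ∀ B : ↥𝒪Y, (B : Y → L) ∘ f ∈ 𝒪X) :
    ∀ W ∈ filtOpens 𝒪Y, (W ∘ filtMap 𝒪X 𝒪Y f hf) ∈ filtOpens 𝒪X := by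
  rintro W ⟨S, rfl⟩
  refine ⟨(fun p : ↥𝒪Y × L => ((⟨(p.1 : Y → L) ∘ f, hf p.1⟩ : ↥𝒪X), p.2)) '' S, ?_⟩
  funext u
  rw [iSup_image]
  rfl

lemma muF_continuous [Order.Frame L] (𝒪 : Set (X → L)) :
    ∀ W ∈ filtOpens 𝒪, (W ∘ muF 𝒪) ∈ filtOpens (filtOpens 𝒪) := by
  rintro W ⟨S, rfl⟩
  refine ⟨(fun p : ↥𝒪 × L =>
    ((⟨phiF 𝒪 p.1, phi_mem 𝒪 p.1⟩ : ↥(filtOpens 𝒪)), p.2)) '' S, ?_⟩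
  funext α
  rw [iSup_image]
  rfl

lemma ptFilter_continuous [Order.Frame L] (𝒪 : Set (X → L)) (h𝒪 : IsLTopology 𝒪) :
    ∀ W ∈ filtOpens 𝒪, (W ∘ ptFilter 𝒪) ∈ 𝒪 := by
  rintro W ⟨S, rfl⟩
  have key : ((fun u : LFilter 𝒪 => ⨆ p ∈ S, u.toFun p.1 ⊓ p.2) ∘ ptFilter 𝒪) =
      sSup ((fun p : ↥𝒪 × L => (p.1 : X → L) ⊓ fun _ => p.2) '' S) := by
    funext x
    rw [sSup_image', iSup_apply]
    exact (iSup_subtype'' S fun p : ↥𝒪 × L =>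
      ((p.1 : X → L) ⊓ fun _ => p.2 : X → L) x).symm
  rw [key]
  apply h𝒪.sSup_mem
  rintro g ⟨p, _, rfl⟩
  exact h𝒪.inf_mem _ _ p.1.2 (h𝒪.const_mem p.2)

/-- An `L`-order as a binary `L`-relation with the order axioms. -/
structure IsLOrder [Order.Frame L] (e : X → X → L) : Prop where
  refl : ∀ x, e x x = ⊤
  trans : ∀ x y z, e x y ⊓ e y z ≤ e x z
  antisymm : ∀ x y, e x y = ⊤ → e y x = ⊤ → x = y

/-- `s` is a supremum of the `L`-subset `A`. -/
def IsSupE [Order.Frame L] (e : X → X → L) (A : X → L) (s : X) : Prop :=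
  ∀ y, e s y = ⨅ z, A z ⇨ e z y

/-- `i` is an infimum of the `L`-subset `A`. -/
def IsInfE [Order.Frame L] (e : X → X → L) (A : X → L) (i : X) : Prop :=
  ∀ y, e y i = ⨅ z, A z ⇨ e y z

/-- Completeness: every `L`-subset has a supremum. -/
def CompleteE [Order.Frame L] (e : X → X → L) : Prop := ∀ A : X → L, ∃ s, IsSupE e A s

/-- Directedness of an `L`-subset. -/
def DirectedE [Order.Frame L] (e : X → X → L) (D : X → L) : Prop :=
  (⨆ x, D x) = ⊤ ∧ ∀ x y, D x ⊓ D y ≤ ⨆ z, D z ⊓ e x z ⊓ e y z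

/-- An ideal: a directed lower set. -/
def IsIdealE [Order.Frame L] (e : X → X → L) (I : X → L) : Prop :=
  DirectedE e I ∧ ∀ x y, I x ⊓ e y x ≤ I y

/-- `↑x(y) = e(x,y)`. -/
def upE [Order.Frame L] (e : X → X → L) (x : X) : X → L := fun y => e x y

/-- `⇓x(y) = ⨅_{I ideal} (e(x, ⊔I) ⇨ I(y))`. -/
def wbelowE [Order.Frame L] (e : X → X → L) (x y : X) : L :=
  ⨅ I : X → L, ⨅ _ : IsIdealE e I, ⨅ s : X, ⨅ _ : IsSupE e I s, e x s ⇨ I y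

/-- Scott open `L`-subsets. -/
def ScottOpenE [Order.Frame L] (e : X → X → L) (A : X → L) : Prop :=
  (∀ x y, A x ⊓ e x y ≤ A y) ∧
  ∀ D : X → L, DirectedE e D → ∀ s, IsSupE e D s → A s ≤ ⨆ x, A x ⊓ D x

/-- The `L`-Scott topology. -/
def scottOpens [Order.Frame L] (e : X → X → L) : Set (X → L) := { A | ScottOpenE e A }

/-- `u^l(x) = ⨆_{A ∈ σ_L(X)} u(A) ⊓ sub(A, ↑x)`. -/
def lowerOf [Order.Frame L] (e : X → X → L) (u : LFilter (scottOpens e)) : X → L :=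
  fun x => ⨆ A : ↥(scottOpens e), u.toFun A ⊓ subL (A : X → L) (upE e x)

/-- The specialization `L`-order `e(x,y) = ⨅_{A ∈ 𝒪} (A x ⇨ A y)`. -/
def specE [Order.Frame L] (𝒪 : Set (X → L)) (x y : X) : L :=
  ⨅ A : ↥𝒪, (A : X → L) x ⇨ (A : X → L) y

/-- `sub(u,v) = ⨅_{A ∈ 𝒪} (u A ⇨ v A)` for open filters. -/
def subF [Order.Frame L] {𝒪 : Set (X → L)} (u v : LFilter 𝒪) : L :=
  ⨅ A : ↥𝒪, u.toFun A ⇨ v.toFun A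

section ScottOpen

variable [Order.Frame L] {e : X → X → L}

lemma IsSupE.apply_le (hrefl : ∀ x, e x x = ⊤) {S : X → L} {s : X} (hs : IsSupE e S s)
    (z : X) : S z ≤ e z s := by
  have h : (⊤ : L) ≤ S z ⇨ e z s := ((hrefl s).symm.trans (hs s)).le.trans (iInf_le _ z)
  simpa using h

lemma IsSupE.eq_top_of_bot {s : X} (hs : IsSupE e (fun _ => ⊥) s) (y : X) : e s y = ⊤ := by
  simp [hs y]

lemma IsInfE.le_apply (hrefl : ∀ x, e x x = ⊤) {D : X → L} {i : X} (hi : IsInfE e D i)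
    (z : X) : D z ≤ e i z := by
  have h : (⊤ : L) ≤ D z ⇨ e i z := ((hrefl i).symm.trans (hi i)).le.trans (iInf_le _ z)
  simpa using h

lemma IsInfE.subL_upE_le {A D : X → L} {i : X} (hi : IsInfE e D i) (hDA : D ≤ A) (x : X) :
    subL A (upE e x) ≤ e x i := by
  rw [hi x]
  exact iInf_mono fun w => himp_le_himp_right (hDA w)

/-- In a complete `L`-ordered set the infimum of `D` is the supremum of its lower bounds. -/
lemma CompleteE.exists_isInfE (hord : IsLOrder e) (hc : CompleteE e) (D : X → L) :
    ∃ i, IsInfE e D i := by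
  obtain ⟨i, hi⟩ := hc fun y => ⨅ z, D z ⇨ e y z
  have hlower : ∀ z, D z ≤ e i z := fun z => by
    rw [hi z]
    exact le_iInf fun w => le_himp_iff'.2 (le_himp_iff.1 (iInf_le _ z))
  refine ⟨i, fun y => le_antisymm (le_iInf fun z => le_himp_iff.2 ?_) (hi.apply_le hord.refl y)⟩
  exact (inf_le_inf_left _ (hlower z)).trans (hord.trans y i z)

lemma scottOpen_const (a : L) : (fun _ => a : X → L) ∈ scottOpens e := by
  refine ⟨fun _ _ => inf_le_left, fun D hD _ _ => ?_⟩
  show a ≤ ⨆ x, a ⊓ D x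
  rw [← inf_iSup_eq, hD.1, inf_top_eq]

lemma iSup_inf_iSup_le_of_directedE {A B D : X → L} (hA : ∀ x y, A x ⊓ e x y ≤ A y)
    (hB : ∀ x y, B x ⊓ e x y ≤ B y) (hD : DirectedE e D) :
    (⨆ x, A x ⊓ D x) ⊓ (⨆ y, B y ⊓ D y) ≤ ⨆ z, (A ⊓ B) z ⊓ D z := by
  rw [iSup_inf_eq]
  refine iSup_le fun x => ?_
  rw [inf_iSup_eq]
  refine iSup_le fun y => ?_
  calc A x ⊓ D x ⊓ (B y ⊓ D y) = A x ⊓ B y ⊓ (D x ⊓ D y) := inf_inf_inf_comm _ _ _ _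
    _ ≤ A x ⊓ B y ⊓ ⨆ z, D z ⊓ e x z ⊓ e y z := inf_le_inf_left _ (hD.2 x y)
    _ = ⨆ z, A x ⊓ e x z ⊓ (B y ⊓ e y z) ⊓ D z := by rw [inf_iSup_eq]; congr! 1; ac_rfl
    _ ≤ ⨆ z, (A ⊓ B) z ⊓ D z :=
      iSup_mono fun z => inf_le_inf_right _ (inf_le_inf (hA x z) (hB y z))

lemma scottOpen_inf {A B : X → L} (hA : A ∈ scottOpens e) (hB : B ∈ scottOpens e) :
    A ⊓ B ∈ scottOpens e :=
  ⟨fun x y => le_inf ((inf_le_inf_right _ inf_le_left).trans (hA.1 x y))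
      ((inf_le_inf_right _ inf_le_right).trans (hB.1 x y)),
    fun D hD s hs => (inf_le_inf (hA.2 D hD s hs) (hB.2 D hD s hs)).trans
      (iSup_inf_iSup_le_of_directedE hA.1 hB.1 hD)⟩

lemma LFilter.inf_const_le {𝒪 : Set (X → L)} (u : LFilter 𝒪) (A B : ↥𝒪) {c : L}
    (hc : (fun _ => c : X → L) ∈ 𝒪) (hBc : (B : X → L) ⊓ (fun _ => c) ∈ 𝒪)
    (hle : (B : X → L) ⊓ (fun _ => c) ≤ A) : u.toFun B ⊓ c ≤ u.toFun A :=
  calc u.toFun B ⊓ c ≤ u.toFun B ⊓ u.toFun ⟨_, hc⟩ := inf_le_inf_left _ (u.const_le c hc)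
    _ = u.toFun ⟨_, hBc⟩ := (u.map_inf B ⟨_, hc⟩ hBc).symm
    _ ≤ u.toFun A := u.mono ⟨_, hBc⟩ A hle

lemma inf_const_subL_upE_le {A B : X → L} (hA : ∀ x y, A x ⊓ e x y ≤ A y) (x : X) :
    B ⊓ (fun _ => A x ⊓ subL B (upE e x)) ≤ A := fun w =>
  calc B w ⊓ (A x ⊓ subL B (upE e x))
      = A x ⊓ (B w ⊓ subL B (upE e x)) := inf_left_comm _ _ _
    _ ≤ A x ⊓ (B w ⊓ (B w ⇨ e x w)) := inf_le_inf_left _ (inf_le_inf_left _ (iInf_le _ w))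
    _ ≤ A x ⊓ e x w := inf_le_inf_left _ inf_himp_le
    _ ≤ A w := hA x w

lemma iSup_lowerOf_eq_top (hc : CompleteE e) (u : LFilter (scottOpens e)) :
    ⨆ x, lowerOf e u x = ⊤ := by
  obtain ⟨s₀, hs₀⟩ := hc fun _ => ⊥
  have htop : ⊤ ≤ u.toFun ⟨_, scottOpen_const ⊤⟩ ⊓ subL (fun _ => ⊤) (upE e s₀) :=
    le_inf (u.const_le ⊤ _) (le_iInf fun w => by simp [upE, hs₀.eq_top_of_bot])
  refine top_unique (htop.trans (le_iSup_of_le s₀ ?_))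
  exact le_iSup (fun B : ↥(scottOpens e) => u.toFun B ⊓ subL (B : X → L) (upE e s₀))
    ⟨_, scottOpen_const ⊤⟩

lemma lowerOf_inf_le_iSup (hord : IsLOrder e) (hc : CompleteE e) (u : LFilter (scottOpens e))
    (x y : X) : lowerOf e u x ⊓ lowerOf e u y ≤ ⨆ z, lowerOf e u z ⊓ e x z ⊓ e y z := by
  refine (iSup_inf_eq _ _).trans_le (iSup_le fun A => ?_)
  refine (inf_iSup_eq _ _).trans_le (iSup_le fun B => ?_)
  have hAB := scottOpen_inf A.2 B.2
  obtain ⟨z, hz⟩ := hc.exists_isInfE hord ((A : X → L) ⊓ B)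
  have hz_lower : subL ((A : X → L) ⊓ B) (upE e z) = ⊤ :=
    top_unique (le_iInf fun w => le_himp_iff.2 (inf_le_right.trans (hz.le_apply hord.refl w)))
  have hu : u.toFun A ⊓ u.toFun B ≤ lowerOf e u z := by
    rw [← u.map_inf A B hAB]
    exact le_iSup_of_le ⟨_, hAB⟩ (by rw [hz_lower, inf_top_eq])
  refine le_iSup_of_le z ?_
  rw [inf_inf_inf_comm]
  exact le_inf (le_inf (inf_le_left.trans hu)
    (inf_le_right.trans (inf_le_left.trans (hz.subL_upE_le inf_le_left x))))
    (inf_le_right.trans (inf_le_right.trans (hz.subL_upE_le inf_le_right y)))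

lemma lowerOf_directedE (hord : IsLOrder e) (hc : CompleteE e) (u : LFilter (scottOpens e)) :
    DirectedE e (lowerOf e u) :=
  ⟨iSup_lowerOf_eq_top hc u, lowerOf_inf_le_iSup hord hc u⟩

lemma inf_lowerOf_le (A : ↥(scottOpens e)) (u : LFilter (scottOpens e)) (x : X) :
    (A : X → L) x ⊓ lowerOf e u x ≤ u.toFun A := by
  refine (inf_iSup_eq _ _).trans_le (iSup_le fun B => ?_)
  have hc := scottOpen_const (e := e) ((A : X → L) x ⊓ subL (B : X → L) (upE e x))
  calc (A : X → L) x ⊓ (u.toFun B ⊓ subL B (upE e x))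
      = u.toFun B ⊓ ((A : X → L) x ⊓ subL B (upE e x)) := inf_left_comm _ _ _
    _ ≤ u.toFun A :=
      u.inf_const_le A B hc (scottOpen_inf B.2 hc) (inf_const_subL_upE_le A.2.1 x)

end ScottOpen

/-- For a complete `L`-ordered set `(X, e)`, every Scott open `A`, and
every open filter `u` of the `L`-Scott topology: `A(r(u)) ≤ u(A)` where
`r(u) = ⊔(u^l)`; i.e. `r⁻(A) ≤ φ(A)`. -/
theorem stmt12 [Order.Frame L] (e : X → X → L) (hord : IsLOrder e) (hc : CompleteE e)
    (A : ↥(scottOpens e)) (u : LFilter (scottOpens e)) (s : X)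
    (hs : IsSupE e (lowerOf e u) s) :
    (A : X → L) s ≤ u.toFun A := by
  calc (A : X → L) s ≤ ⨆ x, (A : X → L) x ⊓ lowerOf e u x :=
        A.2.2 _ (lowerOf_directedE hord hc u) s hs
    _ ≤ u.toFun A := iSup_le (inf_lowerOf_le A u)
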